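/- Let (u,v) ∈ X₀ (smooth with |u|+|v| < 1 pointwise on [0,1]) with I(u,v) < −α for some α > 0, where I(u,v) = ∫₀¹[(|u|+|v|)²−1]dx. Define u_k(x) := u(x) + (1/2)sin(kx)(1 − (|u(x)|+|v(x)|)²) and v_k := v. Then (u_k,v_k) ∈ X₀ for all k, (u_k,v_k) → (u,v) weakly in L², and liminf_{k→∞} I(u_k, v_k) ≥ I(u,v) + α²/16. -/

import Mathlib

open MeasureTheory Filter

def WeakL2Tendsto (F : ℕ → ℝ → ℝ) (f : ℝ → ℝ) : Prop :=
  ∀ g : ℝ → ℝ, MemLp g 2 (volume.restrict (Set.Ioc (0 : ℝ) 1)) →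
    Tendsto (fun k => ∫ x in Set.Ioc (0 : ℝ) 1, F k x * g x) atTop
      (nhds (∫ x in Set.Ioc (0 : ℝ) 1, f x * g x))

/-- The perturbed sequence u_k(x) = u(x) + ½ sin(kx)(1 − (|u(x)|+|v(x)|)²). -/
noncomputable def toyPerturb (u v : ℝ → ℝ) (k : ℕ) (x : ℝ) : ℝ :=
  u x + (1 / 2) * Real.sin (k * x) * (1 - (|u x| + |v x|) ^ 2)

/- ### Auxiliary lemmas: a Riemann–Lebesgue lemma for `sin (c k x)` and `cos (c k x)` -/

lemma rl_aux (h : ℝ → ℝ)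
    (θ : ℕ → ℝ) (hθ : Tendsto (fun k => -θ k / (2 * Real.pi)) atTop (cocompact ℝ)) :
    Tendsto (fun k => ∫ x in Set.Ioc (0:ℝ) 1,
      Complex.exp ((θ k * x : ℝ) * Complex.I) * (h x : ℂ)) atTop (nhds 0) := by
  have key := (Real.tendsto_integral_exp_smul_cocompact
      (Set.indicator (Set.Ioc (0:ℝ) 1) (fun x => (h x : ℂ)))).comp hθ
  convert key using 2 with k
  rw [← MeasureTheory.integral_indicator measurableSet_Ioc]
  congr 1
  funext v
  by_cases hv : v ∈ Set.Ioc (0:ℝ) 1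
  · rw [Set.indicator_of_mem hv, Set.indicator_of_mem hv]
    simp only [Circle.smul_def, Real.fourierChar_apply]
    rw [show 2 * Real.pi * -(v * (-θ k / (2 * Real.pi))) = θ k * v from by
      field_simp, smul_eq_mul]
  · simp [Set.indicator_of_notMem hv]

lemma rl_int (h : ℝ → ℝ) (hh : IntegrableOn h (Set.Ioc (0:ℝ) 1)) (θ : ℝ) :
    IntegrableOn (fun x => Complex.exp ((θ * x : ℝ) * Complex.I) * (h x : ℂ))
      (Set.Ioc (0:ℝ) 1) := by
  apply Integrable.bdd_mul (c := 1) hh.ofReal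
  · exact (Complex.continuous_exp.comp
      ((Complex.continuous_ofReal.comp (continuous_const.mul continuous_id)).mul
        continuous_const)).aestronglyMeasurable
  · exact Eventually.of_forall fun x => le_of_eq (Complex.norm_exp_ofReal_mul_I _)

lemma rl_tendsto_cocompact (c : ℝ) (hc : 0 < c) :
    Tendsto (fun k : ℕ => -(c * k) / (2 * Real.pi)) atTop (cocompact ℝ) := by
  have h1 : Tendsto (fun k : ℕ => -(c * k) / (2 * Real.pi)) atTop atBot := by
    apply Tendsto.atBot_div_const (by positivity)
    exact tendsto_neg_atBot_iff.mpr
      ((tendsto_natCast_atTop_atTop).const_mul_atTop hc)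
  exact h1.mono_right atBot_le_cocompact

lemma rl_sin (h : ℝ → ℝ) (hh : IntegrableOn h (Set.Ioc (0:ℝ) 1)) (c : ℝ) (hc : 0 < c) :
    Tendsto (fun k : ℕ => ∫ x in Set.Ioc (0:ℝ) 1, Real.sin (c * k * x) * h x)
      atTop (nhds 0) := by
  have key := rl_aux h (fun k => c * k) (rl_tendsto_cocompact c hc)
  have him := (Complex.continuous_im.tendsto 0).comp key
  simp only [Function.comp_def, Complex.zero_im] at him
  convert him using 2 with k
  have e := integral_im (μ := volume.restrict (Set.Ioc (0:ℝ) 1)) (rl_int h hh (c * k))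
  simp only [RCLike.im_to_complex] at e
  rw [← e]
  congr 1
  funext x
  simp [Complex.mul_im, ← Complex.ofReal_mul, Complex.exp_ofReal_mul_I_im,
    Complex.exp_ofReal_mul_I_re, mul_assoc]

lemma rl_cos (h : ℝ → ℝ) (hh : IntegrableOn h (Set.Ioc (0:ℝ) 1)) (c : ℝ) (hc : 0 < c) :
    Tendsto (fun k : ℕ => ∫ x in Set.Ioc (0:ℝ) 1, Real.cos (c * k * x) * h x)
      atTop (nhds 0) := by
  have key := rl_aux h (fun k => c * k) (rl_tendsto_cocompact c hc)
  have hre := (Complex.continuous_re.tendsto 0).comp key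
  simp only [Function.comp_def, Complex.zero_re] at hre
  convert hre using 2 with k
  have e := integral_re (μ := volume.restrict (Set.Ioc (0:ℝ) 1)) (rl_int h hh (c * k))
  simp only [RCLike.re_to_complex] at e
  rw [← e]
  congr 1
  funext x
  simp [Complex.mul_re, ← Complex.ofReal_mul, Complex.exp_ofReal_mul_I_im,
    Complex.exp_ofReal_mul_I_re, mul_assoc]

/-- Multiplication by a continuous function preserves integrability on `Ioc 0 1`. -/
lemma bdd_cont_mul {φ g : ℝ → ℝ} (hφ : Continuous φ)
    (hg : Integrable g (volume.restrict (Set.Ioc (0:ℝ) 1))) :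
    Integrable (fun x => φ x * g x) (volume.restrict (Set.Ioc (0:ℝ) 1)) := by
  obtain ⟨C, hC⟩ := (isCompact_Icc (a := (0:ℝ)) (b := 1)).exists_bound_of_continuousOn
    hφ.continuousOn
  refine hg.bdd_mul (c := C) hφ.aestronglyMeasurable ?_
  exact ae_restrict_of_forall_mem measurableSet_Ioc
    (fun x hx => hC x (Set.Ioc_subset_Icc_self hx))

/-- The key pointwise inequality. -/
lemma pointwise_ineq (a b w σ : ℝ) (hσ1 : σ = 1 ∨ σ = -1) (hσ2 : σ * (a * b) = |a| * |b|) :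
    (|a| + |b|) ^ 2 - 1 + ((1/2) * (1 - (|a| + |b|) ^ 2)) ^ 2 * w ^ 2
      + w * (a * (2 * ((1/2) * (1 - (|a| + |b|) ^ 2)))
          + σ * (b * (2 * ((1/2) * (1 - (|a| + |b|) ^ 2)))))
    ≤ (|a + (1/2) * w * (1 - (|a| + |b|) ^ 2)| + |b|) ^ 2 - 1 := by
  set cc := (1/2) * (1 - (|a| + |b|) ^ 2) with hcc
  have hx : a + (1/2) * w * (1 - (|a| + |b|) ^ 2) = a + cc * w := by rw [hcc]; ring
  have h2 : σ * ((a + cc * w) * b) ≤ |a + cc * w| * |b| := by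
    rw [← abs_mul]
    rcases hσ1 with h | h <;> subst h
    · rw [one_mul]; exact le_abs_self _
    · rw [neg_one_mul]; exact neg_le_abs _
  have e1 : (|a| + |b|) ^ 2 = a ^ 2 + 2 * (|a| * |b|) + b ^ 2 := by
    rw [add_sq, sq_abs, sq_abs]; ring
  have e2 : (|a + cc * w| + |b|) ^ 2 = (a + cc * w) ^ 2 + 2 * (|a + cc * w| * |b|) + b ^ 2 := by
    rw [add_sq, sq_abs, sq_abs]; ring
  rw [hx, e2, e1]
  nlinarith [h2, hσ2]

/-- the perturbed pair (u_k, v) stays subsolutional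
(|u_k|+|v| < 1 on [0,1]), converges weakly in L² to (u,v), and
liminf I(u_k,v) ≥ I(u,v) + α²/16. -/
theorem toy_perturbation_property (α : ℝ) (hα : 0 < α) (u v : ℝ → ℝ)
    (hu : ContDiff ℝ (⊤ : ℕ∞) u) (hv : ContDiff ℝ (⊤ : ℕ∞) v)
    (hsub : ∀ x ∈ Set.Icc (0 : ℝ) 1, |u x| + |v x| < 1)
    (hI : (∫ x in Set.Ioc (0 : ℝ) 1, ((|u x| + |v x|) ^ 2 - 1)) < -α) :
    (∀ k : ℕ, ∀ x ∈ Set.Icc (0 : ℝ) 1, |toyPerturb u v k x| + |v x| < 1) ∧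
    WeakL2Tendsto (toyPerturb u v) u ∧
    (∫ x in Set.Ioc (0 : ℝ) 1, ((|u x| + |v x|) ^ 2 - 1)) + α ^ 2 / 16 ≤
      liminf (fun k =>
        ∫ x in Set.Ioc (0 : ℝ) 1, ((|toyPerturb u v k x| + |v x|) ^ 2 - 1)) atTop := by
  haveI : IsFiniteMeasure (volume.restrict (Set.Ioc (0:ℝ) 1)) :=
    ⟨by simp [Measure.restrict_apply_univ, Real.volume_Ioc]⟩
  have huc : Continuous u := hu.continuous
  have hvc : Continuous v := hv.continuous
  set cf : ℝ → ℝ := fun x => (1/2) * (1 - (|u x| + |v x|) ^ 2) with hcf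
  have hcfc : Continuous cf := by
    apply continuous_const.mul
    exact continuous_const.sub ((huc.abs.add hvc.abs).pow 2)
  -- Part 1
  have part1 : ∀ k : ℕ, ∀ x ∈ Set.Icc (0 : ℝ) 1, |toyPerturb u v k x| + |v x| < 1 := by
    intro k x hx
    have h1 : |u x| + |v x| < 1 := hsub x hx
    have h2 : (0:ℝ) ≤ |u x| + |v x| := by positivity
    have hs1 : 0 ≤ 1 - (|u x| + |v x|) ^ 2 := by nlinarith
    have habs : |toyPerturb u v k x| ≤ |u x| + (1/2) * (1 - (|u x| + |v x|) ^ 2) := by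
      refine (abs_add_le _ _).trans ?_
      have : |(1/2) * Real.sin (k * x) * (1 - (|u x| + |v x|) ^ 2)|
          ≤ (1/2) * (1 - (|u x| + |v x|) ^ 2) := by
        rw [abs_mul, abs_mul, abs_of_nonneg hs1,
          abs_of_nonneg (by norm_num : (0:ℝ) ≤ 1/2)]
        nlinarith [Real.abs_sin_le_one (k * x), abs_nonneg (Real.sin (k*x))]
      linarith
    nlinarith [sq_nonneg (1 - (|u x| + |v x|))]
  refine ⟨part1, ?_, ?_⟩
  -- Part 2 : weak convergence
  · intro g hg
    have hgi : Integrable g (volume.restrict (Set.Ioc (0:ℝ) 1)) := hg.integrable one_le_two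
    have hug : Integrable (fun x => u x * g x) (volume.restrict (Set.Ioc (0:ℝ) 1)) :=
      bdd_cont_mul huc hgi
    have hcg : Integrable (fun x => cf x * g x) (volume.restrict (Set.Ioc (0:ℝ) 1)) :=
      bdd_cont_mul hcfc hgi
    have key := rl_sin (fun x => cf x * g x) hcg 1 one_pos
    simp only [one_mul] at key
    have hsing : ∀ k : ℕ, Integrable (fun x => Real.sin (k * x) * (cf x * g x))
        (volume.restrict (Set.Ioc (0:ℝ) 1)) := by
      intro k
      refine hcg.bdd_mul (c := 1)
        ((Real.continuous_sin.comp (continuous_const.mul continuous_id)).aestronglyMeasurable) ?_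
      exact Eventually.of_forall fun x => by
        simpa using Real.abs_sin_le_one (k * x)
    have split : ∀ k : ℕ, (∫ x in Set.Ioc (0:ℝ) 1, toyPerturb u v k x * g x)
        = (∫ x in Set.Ioc (0:ℝ) 1, u x * g x)
          + ∫ x in Set.Ioc (0:ℝ) 1, Real.sin (k * x) * (cf x * g x) := by
      intro k
      rw [← integral_add hug (hsing k)]
      congr 1
      funext x
      simp only [toyPerturb, hcf]
      ring
    simp only [split]
    simpa using tendsto_const_nhds.add key
  -- Part 3 : liminf estimate
  · set σf : ℝ → ℝ := fun x => if u x * v x < 0 then -1 else 1 with hσf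
    have hσm : Measurable σf := by
      refine Measurable.ite ?_ measurable_const measurable_const
      exact measurableSet_lt (huc.mul hvc).measurable measurable_const
    have hσb : ∀ x, ‖σf x‖ ≤ 1 := by
      intro x
      by_cases h : u x * v x < 0 <;> simp [hσf, h]
    have hσ1 : ∀ x, σf x = 1 ∨ σf x = -1 := by
      intro x
      by_cases h : u x * v x < 0 <;> simp [hσf, h]
    have hσuv : ∀ x, σf x * (u x * v x) = |u x| * |v x| := by
      intro x
      rw [← abs_mul]
      rcases lt_or_ge (u x * v x) 0 with h | h
      · simp only [hσf, if_pos h]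
        rw [abs_of_neg h]; ring
      · simp only [hσf, if_neg (not_lt.mpr h)]
        rw [abs_of_nonneg h]; ring
    set base : ℝ → ℝ := fun x => u x * (2 * cf x) + σf x * (v x * (2 * cf x)) with hbase
    have hbase_int : Integrable base (volume.restrict (Set.Ioc (0:ℝ) 1)) := by
      apply Integrable.add
      · exact ((huc.mul (continuous_const.mul hcfc)).integrableOn_Ioc)
      · exact Integrable.bdd_mul (c := 1) ((hvc.mul (continuous_const.mul hcfc)).integrableOn_Ioc)
          hσm.aestronglyMeasurable (Eventually.of_forall hσb)
    -- the lower-bound integrand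
    set L : ℕ → ℝ → ℝ := fun k x => ((|u x| + |v x|) ^ 2 - 1) + ((1/2) * cf x ^ 2
        + Real.cos (2 * k * x) * (-(1/2) * cf x ^ 2) + Real.sin (k * x) * base x) with hL
    have hA_int : Integrable (fun x => (|u x| + |v x|) ^ 2 - 1)
        (volume.restrict (Set.Ioc (0:ℝ) 1)) :=
      (((huc.abs.add hvc.abs).pow 2).sub continuous_const).integrableOn_Ioc
    have hB_int : Integrable (fun x => (1/2) * cf x ^ 2)
        (volume.restrict (Set.Ioc (0:ℝ) 1)) :=
      (continuous_const.mul (hcfc.pow 2)).integrableOn_Ioc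
    have hAB_int : Integrable (fun x => ((|u x| + |v x|) ^ 2 - 1) + (1/2) * cf x ^ 2)
        (volume.restrict (Set.Ioc (0:ℝ) 1)) := hA_int.add hB_int
    have hcos_int : ∀ k : ℕ, Integrable (fun x => Real.cos (2 * k * x) * (-(1/2) * cf x ^ 2))
        (volume.restrict (Set.Ioc (0:ℝ) 1)) := fun k =>
      ((Real.continuous_cos.comp (continuous_const.mul continuous_id)).mul
        (continuous_const.mul (hcfc.pow 2))).integrableOn_Ioc
    have hsin_int : ∀ k : ℕ, Integrable (fun x => Real.sin (k * x) * base x)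
        (volume.restrict (Set.Ioc (0:ℝ) 1)) := by
      intro k
      refine hbase_int.bdd_mul (c := 1)
        ((Real.continuous_sin.comp (continuous_const.mul continuous_id)).aestronglyMeasurable) ?_
      exact Eventually.of_forall fun x => by simpa using Real.abs_sin_le_one (k * x)
    have hcs_int : ∀ k : ℕ, Integrable (fun x => Real.cos (2 * k * x) * (-(1/2) * cf x ^ 2)
        + Real.sin (k * x) * base x) (volume.restrict (Set.Ioc (0:ℝ) 1)) := fun k =>
      (hcos_int k).add (hsin_int k)
    have hL_int : ∀ k : ℕ, Integrable (L k) (volume.restrict (Set.Ioc (0:ℝ) 1)) := by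
      intro k
      have h1 : Integrable (fun x => (((|u x| + |v x|) ^ 2 - 1) + (1/2) * cf x ^ 2)
          + (Real.cos (2 * k * x) * (-(1/2) * cf x ^ 2) + Real.sin (k * x) * base x))
          (volume.restrict (Set.Ioc (0:ℝ) 1)) := hAB_int.add (hcs_int k)
      refine h1.congr (Eventually.of_forall fun x => ?_)
      simp only [hL]; ring
    have hJ_int : ∀ k : ℕ, Integrable (fun x => (|toyPerturb u v k x| + |v x|) ^ 2 - 1)
        (volume.restrict (Set.Ioc (0:ℝ) 1)) := by
      intro k
      have hct : Continuous (toyPerturb u v k) := by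
        apply huc.add
        exact (continuous_const.mul
          (Real.continuous_sin.comp (continuous_const.mul continuous_id))).mul
          (continuous_const.sub ((huc.abs.add hvc.abs).pow 2))
      exact (((hct.abs.add hvc.abs).pow 2).sub continuous_const).integrableOn_Ioc
    -- pointwise bound
    have hpt : ∀ k : ℕ, ∀ x ∈ Set.Ioc (0:ℝ) 1,
        L k x ≤ (|toyPerturb u v k x| + |v x|) ^ 2 - 1 := by
      intro k x _
      have key := pointwise_ineq (u x) (v x) (Real.sin (k * x)) (σf x) (hσ1 x) (hσuv x)
      have hsin2 : Real.sin ((k : ℝ) * x) ^ 2 = 1/2 - Real.cos (2 * k * x) / 2 := by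
        rw [Real.sin_sq_eq_half_sub, ← mul_assoc]
      rw [hsin2] at key
      simp only [hL, hbase, hcf, toyPerturb]
      nlinarith [key]
    have hmono : ∀ k : ℕ, (∫ x in Set.Ioc (0:ℝ) 1, L k x)
        ≤ ∫ x in Set.Ioc (0:ℝ) 1, ((|toyPerturb u v k x| + |v x|) ^ 2 - 1) := fun k =>
      setIntegral_mono_on (hL_int k) (hJ_int k) measurableSet_Ioc (hpt k)
    -- limit of the lower bound
    have hcos0 : Tendsto (fun k : ℕ => ∫ x in Set.Ioc (0:ℝ) 1,
        Real.cos (2 * k * x) * (-(1/2) * cf x ^ 2)) atTop (nhds 0) :=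
      rl_cos (fun x => -(1/2) * cf x ^ 2)
        ((continuous_const.mul (hcfc.pow 2)).integrableOn_Ioc) 2 two_pos
    have hsin0 : Tendsto (fun k : ℕ => ∫ x in Set.Ioc (0:ℝ) 1,
        Real.sin (k * x) * base x) atTop (nhds 0) := by
      have := rl_sin base hbase_int 1 one_pos
      simpa only [one_mul] using this
    set Istat : ℝ := ∫ x in Set.Ioc (0:ℝ) 1, ((|u x| + |v x|) ^ 2 - 1) with hIstat
    set C2 : ℝ := ∫ x in Set.Ioc (0:ℝ) 1, (1/2) * cf x ^ 2 with hC2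
    have hsplit : ∀ k : ℕ, (∫ x in Set.Ioc (0:ℝ) 1, L k x)
        = (Istat + C2) + ((∫ x in Set.Ioc (0:ℝ) 1, Real.cos (2 * k * x) * (-(1/2) * cf x ^ 2))
          + ∫ x in Set.Ioc (0:ℝ) 1, Real.sin (k * x) * base x) := by
      intro k
      rw [hIstat, hC2, ← integral_add (hcos_int k) (hsin_int k),
        ← integral_add hA_int hB_int, ← integral_add hAB_int (hcs_int k)]
      congr 1
      funext x
      simp only [hL]
      ring
    have hT : Tendsto (fun k : ℕ => ∫ x in Set.Ioc (0:ℝ) 1, L k x) atTop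
        (nhds (Istat + C2)) := by
      simp only [hsplit]
      simpa using tendsto_const_nhds.add (hcos0.add hsin0)
    -- liminf comparison
    have hJbdd : IsBoundedUnder (· ≥ ·) atTop (fun k =>
        ∫ x in Set.Ioc (0:ℝ) 1, ((|toyPerturb u v k x| + |v x|) ^ 2 - 1)) := by
      obtain ⟨b, hb⟩ := hT.isBoundedUnder_ge
      refine ⟨b, ?_⟩
      rw [eventually_map] at hb ⊢
      filter_upwards [hb] with k hk using le_trans hk (hmono k)
    have hJle : ∀ k : ℕ, (∫ x in Set.Ioc (0:ℝ) 1,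
        ((|toyPerturb u v k x| + |v x|) ^ 2 - 1)) ≤ 0 := by
      intro k
      have h1 := setIntegral_mono_on (hJ_int k) (integrable_const (0:ℝ))
        measurableSet_Ioc (fun x hx => ?_)
      · simpa using h1
      · have h2 := part1 k x ⟨le_of_lt hx.1, hx.2⟩
        have h3 : 0 ≤ |toyPerturb u v k x| + |v x| := by positivity
        nlinarith
    have hJub : IsBoundedUnder (· ≤ ·) atTop (fun k =>
        ∫ x in Set.Ioc (0:ℝ) 1, ((|toyPerturb u v k x| + |v x|) ^ 2 - 1)) :=
      ⟨0, eventually_map.2 (Eventually.of_forall hJle)⟩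
    have hliminf : Istat + C2 ≤ liminf (fun k =>
        ∫ x in Set.Ioc (0:ℝ) 1, ((|toyPerturb u v k x| + |v x|) ^ 2 - 1)) atTop := by
      rw [← hT.liminf_eq]
      exact liminf_le_liminf (Eventually.of_forall hmono) hT.isBoundedUnder_ge
        hJub.isCoboundedUnder_ge
    -- numeric estimate : C2 ≥ α² / 8
    set m : ℝ := ∫ x in Set.Ioc (0:ℝ) 1, cf x with hmdef
    have hm : m = -(1/2) * Istat := by
      rw [hmdef, hIstat, ← integral_const_mul]
      congr 1
      funext x
      simp only [hcf]
      ring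
    have hmpos : α / 2 < m := by
      rw [hm]
      linarith [hI]
    have hcs : m ^ 2 ≤ ∫ x in Set.Ioc (0:ℝ) 1, cf x ^ 2 := by
      have h0 : 0 ≤ ∫ x in Set.Ioc (0:ℝ) 1, (cf x - m) ^ 2 :=
        setIntegral_nonneg measurableSet_Ioc (fun x _ => sq_nonneg _)
      have hsq_int : Integrable (fun x => cf x ^ 2) (volume.restrict (Set.Ioc (0:ℝ) 1)) :=
        (hcfc.pow 2).integrableOn_Ioc
      have hmul_int : Integrable (fun x => 2 * m * cf x) (volume.restrict (Set.Ioc (0:ℝ) 1)) :=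
        (continuous_const.mul hcfc).integrableOn_Ioc
      have hsub_int : Integrable (fun x => cf x ^ 2 - 2 * m * cf x)
          (volume.restrict (Set.Ioc (0:ℝ) 1)) := hsq_int.sub hmul_int
      have e1 : (∫ x in Set.Ioc (0:ℝ) 1, (cf x - m) ^ 2)
          = (∫ x in Set.Ioc (0:ℝ) 1, (cf x ^ 2 - 2 * m * cf x)) +
            ∫ x in Set.Ioc (0:ℝ) 1, (m : ℝ) ^ 2 := by
        rw [← integral_add hsub_int (integrable_const (m ^ 2))]
        congr 1; funext x; ring
      have e2 : (∫ x in Set.Ioc (0:ℝ) 1, (cf x ^ 2 - 2 * m * cf x))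
          = (∫ x in Set.Ioc (0:ℝ) 1, cf x ^ 2) - 2 * m * m := by
        rw [integral_sub hsq_int hmul_int, integral_const_mul, ← hmdef]
      have e3 : (∫ x in Set.Ioc (0:ℝ) 1, (m : ℝ) ^ 2) = m ^ 2 := by
        simp [Real.volume_Ioc]
      rw [e1, e2, e3] at h0
      linarith [h0]
    have hC2ge : α ^ 2 / 8 ≤ C2 := by
      have hC2eq : C2 = (1/2) * ∫ x in Set.Ioc (0:ℝ) 1, cf x ^ 2 := by
        rw [hC2, ← integral_const_mul]
      have hm2 : α ^ 2 / 4 < m ^ 2 := by nlinarith [hmpos, hα]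
      rw [hC2eq]
      linarith [hcs, hm2]
    have hfin : Istat + α ^ 2 / 16 ≤ Istat + C2 := by
      have : (0:ℝ) < α ^ 2 := by positivity
      linarith [hC2ge]
    exact le_trans hfin hliminf
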